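/- arXiv:1302.7109 — 9 statements merged into one kernel-verified Lean document; each statement's English description precedes it below -/
import Mathlib

section
/- Let (G, +) be a commutative groupoid and let M be a multiset over G of cardinality n ≥ 2, say M = ⟨m_1, …, m_n⟩. Define δ_M : G → ℕ by δ_M(x) = |{ {i,j} ⊆ {1,…,n} : i < j and m_i + m_j = x }|. Then Σ_{x ∈ G} δ_M(x) = C(n,2), and for every x ∈ G one has N_M(x) = 𝟏_M(x) · C(n−1,2) + δ_M(x). -/
/-! Each card `M_{i,j}` contains the sum `m_i + m_j` once, and contains `m_k` exactly when
`k ∉ {i, j}`. So the sums contribute `δ_M x` to `N_M x`, while each `k` with `m_k = x` is kept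
by exactly the `C(n-1, 2)` pairs `i < j` avoiding `k`. -/

/-- The multiset ⟨m 1, …, m n⟩ determined by a tuple. -/
def msOfFn {G : Type*} {n : ℕ} (m : Fin n → G) : Multiset G := (List.ofFn m : List G)

/-- The card M_{i,j} of the multiset ⟨m 1, …, m n⟩ (for a commutative groupoid
operation `op`): replace the two entries at positions `i` and `j` by their sum. -/
def mcard {G : Type*} (op : G → G → G) {n : ℕ} (m : Fin n → G) (i j : Fin n) :
    Multiset G :=
  ((Finset.univ.filter (fun k : Fin n => k ≠ i ∧ k ≠ j)).val.map m) + {op (m i) (m j)}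

/-- The deck of the multiset ⟨m 1, …, m n⟩: the multiset of all C(n,2) cards. -/
def mdeck {G : Type*} (op : G → G → G) {n : ℕ} (m : Fin n → G) :
    Multiset (Multiset G) :=
  (Finset.univ.filter (fun p : Fin n × Fin n => p.1 < p.2)).val.map
    (fun p => mcard op m p.1 p.2)

open Finset

lemma Multiset.finsum_count_eq_card {α : Type*} [DecidableEq α] (s : Multiset α) :
    ∑ᶠ x, s.count x = Multiset.card s := by
  have hsupp : (Function.support fun x => s.count x) ⊆ (s.toFinset : Set α) := fun x hx =>
    Multiset.mem_toFinset.2 (Multiset.count_ne_zero.1 hx)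
  rw [finsum_eq_finsetSum_of_support_subset _ hsupp, Multiset.toFinset_sum_count_eq]

lemma Fintype.card_product_filter_lt_ne {α : Type*} [Fintype α] [LinearOrder α] (k : α) :
    #{x : α × α | x.1 < x.2 ∧ x.1 ≠ k ∧ x.2 ≠ k} = (Fintype.card α - 1).choose 2 := by
  have h : ({x : α × α | x.1 < x.2 ∧ x.1 ≠ k ∧ x.2 ≠ k} : Finset (α × α))
      = {x ∈ univ.erase k ×ˢ univ.erase k | x.1 < x.2} := by
    ext x; simp only [mem_filter, mem_univ, true_and, mem_product, mem_erase]; tauto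
  rw [h, Finset.card_product_filter_lt, card_erase_of_mem (mem_univ k), card_univ]

lemma Fintype.sum_filter_lt_card_filter_ne {α : Type*} [Fintype α] [LinearOrder α]
    (s : Finset α) :
    ∑ p : α × α with p.1 < p.2, #{k ∈ s | k ≠ p.1 ∧ k ≠ p.2}
      = #s * (Fintype.card α - 1).choose 2 := by
  simp_rw [card_filter]
  rw [sum_comm]
  refine sum_const_nat fun k _ => ?_
  rw [← card_filter, filter_filter, ← Fintype.card_product_filter_lt_ne k]
  simp only [ne_comm]

section Deck

variable {G : Type*} (op : G → G → G) {n : ℕ} (m : Fin n → G)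

/-- `δ_M x` is the multiplicity of `x` in `pairSums op m`. -/
def pairSums : Multiset G :=
  (univ.filter (fun p : Fin n × Fin n => p.1 < p.2)).val.map (fun p => op (m p.1) (m p.2))

lemma card_pairSums : Multiset.card (pairSums op m) = n.choose 2 := by
  rw [pairSums, Multiset.card_map, card_val, Fintype.card_product_filter_lt, Fintype.card_fin]

variable [DecidableEq G]

lemma count_pairSums (x : G) :
    (pairSums op m).count x = #{p : Fin n × Fin n | p.1 < p.2 ∧ op (m p.1) (m p.2) = x} := by
  rw [pairSums, Multiset.count_map, ← filter_val, card_val, filter_filter]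
  simp only [eq_comm]

lemma count_msOfFn (x : G) : (msOfFn m).count x = #{k | m k = x} := by
  rw [msOfFn, ← Fin.univ_val_map, Multiset.count_map, ← filter_val, card_val]
  simp only [eq_comm]

lemma count_mcard (i j : Fin n) (x : G) :
    (mcard op m i j).count x
      = #{k | m k = x ∧ k ≠ i ∧ k ≠ j} + if op (m i) (m j) = x then 1 else 0 := by
  rw [mcard, Multiset.count_add, Multiset.count_map, Multiset.count_singleton, ← filter_val,
    card_val, filter_filter]
  simp only [eq_comm, and_comm]

lemma count_sum_mdeck (x : G) :
    (mdeck op m).sum.count x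
      = (msOfFn m).count x * (n - 1).choose 2 + (pairSums op m).count x := by
  have hsum : (mdeck op m).sum = ∑ p : Fin n × Fin n with p.1 < p.2, mcard op m p.1 p.2 := rfl
  simp only [hsum, Multiset.count_sum', count_mcard, sum_add_distrib, count_pairSums,
    count_msOfFn]
  congr 1
  · simpa only [filter_filter, Fintype.card_fin] using
      Fintype.sum_filter_lt_card_filter_ne {k | m k = x}
  · rw [← card_filter, filter_filter]

end Deck

theorem stmt0_general {G : Type*} [DecidableEq G] (op : G → G → G)
    {n : ℕ} (m : Fin n → G) :
    ∃ δ : G → ℕ,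
      (∀ x : G,
        δ x = ((Finset.univ.filter (fun p : Fin n × Fin n => p.1 < p.2)).val.map
            (fun p => op (m p.1) (m p.2))).count x) ∧
      (∑ᶠ x : G, δ x) = n.choose 2 ∧
      (∀ x : G,
        Multiset.count x (mdeck op m).sum
          = Multiset.count x (msOfFn m) * (n - 1).choose 2 + δ x) :=
  ⟨fun x => (pairSums op m).count x, fun _ => rfl,
    by rw [Multiset.finsum_count_eq_card, card_pairSums], count_sum_mdeck op m⟩

theorem stmt0 {G : Type*} [DecidableEq G] (op : G → G → G)
    (hcomm : ∀ a b : G, op a b = op b a) {n : ℕ} (hn : 2 ≤ n) (m : Fin n → G) :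
    ∃ δ : G → ℕ,
      (∀ x : G,
        δ x = ((Finset.univ.filter (fun p : Fin n × Fin n => p.1 < p.2)).val.map
            (fun p => op (m p.1) (m p.2))).count x) ∧
      (∑ᶠ x : G, δ x) = n.choose 2 ∧
      (∀ x : G,
        Multiset.count x (mdeck op m).sum
          = Multiset.count x (msOfFn m) * (n - 1).choose 2 + δ x) :=
  stmt0_general op m
end

section
/- Let (G, +) be a commutative groupoid and let M and M' be multisets of cardinality 3 over G. Then deck M = deck M' if and only if one of the following holds: (i) M = M'; (ii) M = ⟨r, s, t⟩ and M' = ⟨r, r + s, r + t⟩ for some r, s, t ∈ G satisfying r + (r + s) = s, r + (r + t) = t, and (r + s) + (r + t) = s + t; (iii) M = ⟨r, s, t⟩ and M' = ⟨r + s, r + t, s + t⟩ for some r, s, t ∈ G satisfying (r + s) + (r + t) = r, (r + s) + (s + t) = s, and (r + t) + (s + t) = t. -/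
/-!
The deck of ⟨a, b, c⟩ consists of the cards ⟨c, a + b⟩, ⟨b, a + c⟩, ⟨a, b + c⟩. If two triples
have the same deck, reorder the second one so that the cards agree position by position. Each
agreement either matches the two untouched elements ("direct") or matches each untouched element
with the sum on the other card ("crossed"). Two direct agreements already force the triples to be
equal, exactly one direct agreement, at the element r, is case (ii) with this r, and none is
case (iii). Conversely, the deck depends only on the multiset, and in cases (ii) and (iii) the
identities are exactly what makes the cards coincide.
-/

namespace Multiset

variable {α : Type*}

theorem pair_eq_pair_iff {x y x' y' : α} :
    ({x, y} : Multiset α) = {x', y'} ↔ (x = x' ∧ y = y') ∨ (x = y' ∧ y = x') := by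
  change (([x, y] : List α) : Multiset α) = ([x', y'] : List α) ↔ _
  rw [coe_eq_coe, List.perm_pair]
  simp [and_comm]

theorem triple_rotate (x y z : α) : ({x, y, z} : Multiset α) = {z, x, y} := by
  rw [pair_comm y z]
  exact cons_swap _ _ _

theorem triple_eq_triple_iff {x y z x' y' z' : α} :
    ({x, y, z} : Multiset α) = {x', y', z'} ↔
      (x = x' ∧ ({y, z} : Multiset α) = {y', z'}) ∨
      (x = y' ∧ ({y, z} : Multiset α) = {x', z'}) ∨
      (x = z' ∧ ({y, z} : Multiset α) = {x', y'}) := by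
  have hy : ({x', y', z'} : Multiset α) = {y', x', z'} := cons_swap _ _ _
  have hz : ({x', y', z'} : Multiset α) = {z', x', y'} := triple_rotate _ _ _
  constructor
  · intro h
    have hx : x ∈ ({x', y', z'} : Multiset α) := h ▸ mem_cons_self x _
    simp only [insert_eq_cons, mem_cons, mem_singleton] at hx
    rcases hx with rfl | rfl | rfl
    · exact Or.inl ⟨rfl, (cons_inj_right x).1 h⟩
    · exact Or.inr (Or.inl ⟨rfl, (cons_inj_right x).1 (h.trans hy)⟩)
    · exact Or.inr (Or.inr ⟨rfl, (cons_inj_right x).1 (h.trans hz)⟩)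
  · rintro (⟨rfl, h⟩ | ⟨rfl, h⟩ | ⟨rfl, h⟩)
    · exact congrArg (cons x) h
    · exact (congrArg (cons x) h).trans hy.symm
    · exact (congrArg (cons x) h).trans hz.symm

end Multiset

open Multiset

section Groupoid

variable {G : Type*} (op : G → G → G)

def tripleDeck (a b c : G) : Multiset (Multiset G) :=
  {{c, op a b}, {b, op a c}, {a, op b c}}

theorem mdeck_fin_three (m : Fin 3 → G) : mdeck op m = tripleDeck op (m 0) (m 1) (m 2) := rfl

theorem msOfFn_fin_three (m : Fin 3 → G) : msOfFn m = {m 0, m 1, m 2} := rfl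

def IsShiftTwin (M M' : Multiset G) : Prop :=
  ∃ r s t : G, M = {r, s, t} ∧ M' = {r, op r s, op r t} ∧
    op r (op r s) = s ∧ op r (op r t) = t ∧ op (op r s) (op r t) = op s t

def IsPairSumTwin (M M' : Multiset G) : Prop :=
  ∃ r s t : G, M = {r, s, t} ∧ M' = {op r s, op r t, op s t} ∧
    op (op r s) (op r t) = r ∧ op (op r s) (op s t) = s ∧ op (op r t) (op s t) = t

theorem tripleDeck_shift {r s t : G} (hs : op r (op r s) = s) (ht : op r (op r t) = t)
    (hst : op (op r s) (op r t) = op s t) :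
    tripleDeck op r s t = tripleDeck op r (op r s) (op r t) := by
  rw [tripleDeck, tripleDeck, hs, ht, hst, pair_comm t, pair_comm s]
  exact cons_swap _ _ _

theorem tripleDeck_pairSum {r s t : G} (hr : op (op r s) (op r t) = r)
    (hs : op (op r s) (op s t) = s) (ht : op (op r t) (op s t) = t) :
    tripleDeck op r s t = tripleDeck op (op r s) (op r t) (op s t) := by
  rw [tripleDeck, tripleDeck, hr, hs, ht, pair_comm t, pair_comm s, pair_comm r,
    triple_rotate, pair_comm {op r s, t}]

variable {op} (hcomm : ∀ a b : G, op a b = op b a)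
include hcomm

theorem tripleDeck_swap_left (a b c : G) : tripleDeck op a b c = tripleDeck op b a c := by
  rw [tripleDeck, tripleDeck, hcomm b a, pair_comm {b, op a c}]

theorem tripleDeck_swap_right (a b c : G) : tripleDeck op a b c = tripleDeck op a c b := by
  rw [tripleDeck, tripleDeck, hcomm c b]
  exact cons_swap _ _ _

theorem tripleDeck_congr {a b c a' b' c' : G}
    (h : ({a, b, c} : Multiset G) = {a', b', c'}) :
    tripleDeck op a b c = tripleDeck op a' b' c' := by
  have swapL := tripleDeck_swap_left hcomm
  have swapR := tripleDeck_swap_right hcomm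
  simp only [triple_eq_triple_iff, pair_eq_pair_iff] at h
  rcases h with ⟨rfl, ⟨rfl, rfl⟩ | ⟨rfl, rfl⟩⟩ | ⟨rfl, ⟨rfl, rfl⟩ | ⟨rfl, rfl⟩⟩ |
    ⟨rfl, ⟨rfl, rfl⟩ | ⟨rfl, rfl⟩⟩
  · rfl
  · exact swapR _ _ _
  · exact swapL _ _ _
  · exact (swapR _ _ _).trans (swapL _ _ _)
  · exact (swapL _ _ _).trans (swapR _ _ _)
  · exact (swapL _ _ _).trans ((swapR _ _ _).trans (swapL _ _ _))

theorem exists_cards_eq_of_tripleDeck_eq {a b c a' b' c' : G}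
    (h : tripleDeck op a b c = tripleDeck op a' b' c') :
    ∃ a'' b'' c'' : G, ({a', b', c'} : Multiset G) = {a'', b'', c''} ∧
      ({c, op a b} : Multiset G) = {c'', op a'' b''} ∧
      ({b, op a c} : Multiset G) = {b'', op a'' c''} ∧
      ({a, op b c} : Multiset G) = {a'', op b'' c''} := by
  rw [tripleDeck, tripleDeck, triple_eq_triple_iff] at h
  rcases h with ⟨h₁, h⟩ | ⟨h₁, h⟩ | ⟨h₁, h⟩ <;>
    rcases pair_eq_pair_iff.1 h with ⟨h₂, h₃⟩ | ⟨h₂, h₃⟩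
  · exact ⟨a', b', c', rfl, h₁, h₂, h₃⟩
  · exact ⟨b', a', c', cons_swap _ _ _, by rwa [hcomm b'], h₂, h₃⟩
  · exact ⟨a', c', b', by rw [pair_comm], h₁, h₂, by rwa [hcomm c']⟩
  · exact ⟨c', a', b', triple_rotate _ _ _, by rwa [hcomm c'], by rwa [hcomm c'], h₃⟩
  · exact ⟨b', c', a', (triple_rotate _ _ _).symm, h₁, by rwa [hcomm b'], by rwa [hcomm c']⟩
  · exact ⟨c', b', a', by rw [triple_rotate, pair_comm], by rwa [hcomm c'], by rwa [hcomm c'],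
      by rwa [hcomm b']⟩

theorem eq_or_twin_of_cards_eq {a b c a' b' c' : G}
    (h₁ : ({c, op a b} : Multiset G) = {c', op a' b'})
    (h₂ : ({b, op a c} : Multiset G) = {b', op a' c'})
    (h₃ : ({a, op b c} : Multiset G) = {a', op b' c'}) :
    ({a, b, c} : Multiset G) = {a', b', c'} ∨
      IsShiftTwin op {a, b, c} {a', b', c'} ∨ IsPairSumTwin op {a, b, c} {a', b', c'} := by
  rcases pair_eq_pair_iff.1 h₁ with ⟨hc, hab⟩ | ⟨hc, hab⟩ <;>
  rcases pair_eq_pair_iff.1 h₂ with ⟨hb, hac⟩ | ⟨hb, hac⟩ <;>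
  rcases pair_eq_pair_iff.1 h₃ with ⟨ha, hbc⟩ | ⟨ha, hbc⟩
  · exact Or.inl (by rw [ha, hb, hc])
  · subst hb hc
    rw [(cons_inj_left _).1 h₃]
    exact Or.inl rfl
  · subst ha hc
    rw [(cons_inj_left _).1 h₂]
    exact Or.inl rfl
  · subst hc hac hbc
    refine Or.inr (Or.inl ⟨c, a, b, triple_rotate _ _ _, ?_, ?_, ?_, ?_⟩)
    · rw [hcomm c a, hcomm c b, triple_rotate, pair_comm]
    · rw [hcomm c, hcomm c a, ← ha]
    · rw [hcomm c, hcomm c b, ← hb]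
    · rw [hcomm c a, hcomm c b, hab]
      exact hcomm _ _
  · subst ha hb
    rw [(cons_inj_left _).1 h₁]
    exact Or.inl rfl
  · subst hb hab hbc
    refine Or.inr (Or.inl ⟨b, a, c, cons_swap _ _ _, ?_, ?_, ?_, ?_⟩)
    · rw [hcomm b a]
      exact (triple_rotate _ _ _).symm
    · rw [hcomm b a, ← ha]
    · rw [hcomm b (op b c), ← hc]
    · rw [hac, hcomm b a]
      exact hcomm _ _
  · subst ha hab hac
    refine Or.inr (Or.inl ⟨a, b, c, rfl, ?_, ?_, ?_, ?_⟩)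
    · rw [pair_comm]
    · exact hb.symm
    · exact hc.symm
    · rw [hbc]
      exact hcomm _ _
  · subst hab hac hbc
    refine Or.inr (Or.inr ⟨a, b, c, rfl, ?_, ?_, ?_, ?_⟩)
    · rw [triple_rotate, pair_comm (op b c)]
    · rw [hcomm, ← ha]
    · rw [hcomm, ← hb]
    · rw [hcomm, ← hc]

theorem tripleDeck_eq_tripleDeck_iff {a b c a' b' c' : G} :
    tripleDeck op a b c = tripleDeck op a' b' c' ↔
      ({a, b, c} : Multiset G) = {a', b', c'} ∨
        IsShiftTwin op {a, b, c} {a', b', c'} ∨ IsPairSumTwin op {a, b, c} {a', b', c'} := by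
  constructor
  · intro h
    obtain ⟨a'', b'', c'', hperm, h₁, h₂, h₃⟩ := exists_cards_eq_of_tripleDeck_eq hcomm h
    rw [hperm]
    exact eq_or_twin_of_cards_eq hcomm h₁ h₂ h₃
  · rintro (h | ⟨r, s, t, hM, hM', hs, ht, hst⟩ | ⟨r, s, t, hM, hM', hr, hs, ht⟩)
    · exact tripleDeck_congr hcomm h
    · rw [tripleDeck_congr hcomm hM, tripleDeck_congr hcomm hM']
      exact tripleDeck_shift op hs ht hst
    · rw [tripleDeck_congr hcomm hM, tripleDeck_congr hcomm hM']
      exact tripleDeck_pairSum op hr hs ht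

end Groupoid

theorem stmt4 {G : Type*} (op : G → G → G)
    (hcomm : ∀ a b : G, op a b = op b a)
    (m m' : Fin 3 → G) :
    mdeck op m = mdeck op m' ↔
      (msOfFn m = msOfFn m' ∨
        (∃ r s t : G,
          msOfFn m = {r, s, t} ∧ msOfFn m' = {r, op r s, op r t} ∧
          op r (op r s) = s ∧ op r (op r t) = t ∧
          op (op r s) (op r t) = op s t) ∨
        (∃ r s t : G,
          msOfFn m = {r, s, t} ∧ msOfFn m' = {op r s, op r t, op s t} ∧
          op (op r s) (op r t) = r ∧ op (op r s) (op s t) = s ∧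
          op (op r t) (op s t) = t)) := by
  rw [mdeck_fin_three, mdeck_fin_three, msOfFn_fin_three, msOfFn_fin_three]
  exact tripleDeck_eq_tripleDeck_iff hcomm
end

section
/- Let (G, +) be a commutative groupoid with elements r, s, t, u, v satisfying x + u = v and x + v = u for all x ∈ {r, s, t}, and r + s = s, s + t = t, t + r = r. Let M = ⟨r, s, t, u⟩ and M' = ⟨r, s, t, v⟩. Then deck M = deck M' = ⟨⟨r, s, u⟩, ⟨r, t, u⟩, ⟨s, t, u⟩, ⟨r, s, v⟩, ⟨r, t, v⟩, ⟨s, t, v⟩⟩; moreover, if u ≠ v then M ≠ M'. -/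
theorem mdeck_four {G : Type*} (op : G → G → G) (a b c d : G) :
    mdeck op ![a, b, c, d] =
      {{c, d, op a b}, {b, d, op a c}, {b, c, op a d},
        {a, d, op b c}, {a, c, op b d}, {a, b, op c d}} :=
  rfl

theorem stmt6 {G : Type*} (op : G → G → G)
    (hcomm : ∀ a b : G, op a b = op b a)
    (r s t u v : G)
    (h1 : ∀ x ∈ ({r, s, t} : Set G), op x u = v ∧ op x v = u)
    (h2 : op r s = s) (h3 : op s t = t) (h4 : op t r = r) :
    mdeck op ![r, s, t, u] = mdeck op ![r, s, t, v] ∧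
    mdeck op ![r, s, t, u] =
      ({({r, s, u} : Multiset G), {r, t, u}, {s, t, u},
        {r, s, v}, {r, t, v}, {s, t, v}} : Multiset (Multiset G)) ∧
    (u ≠ v → ({r, s, t, u} : Multiset G) ≠ ({r, s, t, v} : Multiset G)) := by
  obtain ⟨hru, hrv⟩ := h1 r (by simp)
  obtain ⟨hsu, hsv⟩ := h1 s (by simp)
  obtain ⟨htu, htv⟩ := h1 t (by simp)
  have hrt : op r t = r := (hcomm r t).trans h4
  have hdeck_u : mdeck op ![r, s, t, u] =
      ({({r, s, u} : Multiset G), {r, t, u}, {s, t, u},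
        {r, s, v}, {r, t, v}, {s, t, v}} : Multiset (Multiset G)) := by
    rw [mdeck_four, h2, hrt, hru, h3, hsu, htu]
    simp only [Multiset.insert_eq_cons, ← Multiset.singleton_add, add_comm, add_left_comm,
      add_assoc]
  have hdeck_v : mdeck op ![r, s, t, v] = mdeck op ![r, s, t, u] := by
    rw [mdeck_four, mdeck_four, h2, hrt, hru, hrv, h3, hsu, hsv, htu, htv]
    simp only [Multiset.insert_eq_cons, ← Multiset.singleton_add, add_comm, add_left_comm,
      add_assoc]
  exact ⟨hdeck_v.symm, hdeck_u, fun huv h => huv (by simpa using h)⟩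
end

section
/- Let (G, +) be a commutative groupoid with elements r, s, t satisfying r + (r + s) = s, r + (r + t) = t, and (r + s) + (r + t) = s + t. Then the multisets M = ⟨r, s, t⟩ and M' = ⟨r, r + s, r + t⟩ satisfy deck M = deck M' = ⟨⟨r, s + t⟩, ⟨s, r + t⟩, ⟨t, r + s⟩⟩; moreover, if {r + s, r + t} ≠ {s, t} (as unordered pairs), then M ≠ M'. -/
theorem mdeck_fin_three_s7 {G : Type*} (op : G → G → G) (a b c : G) :
    mdeck op ![a, b, c] = {({a, op b c} : Multiset G), {b, op a c}, {c, op a b}} := by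
  change {({c, op a b} : Multiset G), {b, op a c}, {a, op b c}} = _
  simp only [Multiset.insert_eq_cons, ← Multiset.singleton_add]
  abel

theorem stmt7_general {G : Type*} (op : G → G → G)
    (r s t : G)
    (h1 : op r (op r s) = s) (h2 : op r (op r t) = t)
    (h3 : op (op r s) (op r t) = op s t) :
    mdeck op ![r, s, t] = mdeck op ![r, op r s, op r t] ∧
    mdeck op ![r, s, t] =
      ({({r, op s t} : Multiset G), {s, op r t}, {t, op r s}} : Multiset (Multiset G)) ∧
    (({op r s, op r t} : Multiset G) ≠ ({s, t} : Multiset G) →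
      ({r, s, t} : Multiset G) ≠ ({r, op r s, op r t} : Multiset G)) := by
  refine ⟨?_, mdeck_fin_three_s7 op r s t, fun hne heq => hne ?_⟩
  · rw [mdeck_fin_three_s7, mdeck_fin_three_s7, h1, h2, h3]
    simp only [Multiset.insert_eq_cons, ← Multiset.singleton_add]
    abel_nf
  · simp only [Multiset.insert_eq_cons, Multiset.cons_inj_right] at heq
    exact heq.symm

theorem stmt7 {G : Type*} (op : G → G → G)
    (hcomm : ∀ a b : G, op a b = op b a)
    (r s t : G)
    (h1 : op r (op r s) = s) (h2 : op r (op r t) = t)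
    (h3 : op (op r s) (op r t) = op s t) :
    mdeck op ![r, s, t] = mdeck op ![r, op r s, op r t] ∧
    mdeck op ![r, s, t] =
      ({({r, op s t} : Multiset G), {s, op r t}, {t, op r s}} : Multiset (Multiset G)) ∧
    (({op r s, op r t} : Multiset G) ≠ ({s, t} : Multiset G) →
      ({r, s, t} : Multiset G) ≠ ({r, op r s, op r t} : Multiset G)) :=
  stmt7_general op r s t h1 h2 h3
end

section
/- Let G be a non-associative semiring (a type with an additively commutative monoid structure with neutral element 0, a multiplication with unit 1, distributing over addition, and with 0 annihilating under multiplication). Let f, g : G^n → G be affine functions, say f(x_1, …, x_n) = a_1x_1 + ⋯ + a_nx_n + c and g(x_1, …, x_n) = b_1x_1 + ⋯ + b_nx_n + d. Assume that either c = d = 0 (f and g are linear) or addition in G is cancellative. Then f ≡ g if and only if the coefficient multisets satisfy ⟨a_1, …, a_n⟩ = ⟨b_1, …, b_n⟩ and c = d. -/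
/-!
Reindexing the variables by `σ` turns `∑ bᵢ x_{σ i}` into `∑ b_{σ⁻¹ i} xᵢ`, so `f ≡ g` says that
`f` and `g ∘ σ⁻¹` agree as functions. An affine function determines its coefficients: evaluating
at `0` recovers the constant term, and evaluating at the `i`-th unit vector recovers `aᵢ` plus the
constant term, which can be removed when the constants vanish or addition is cancellative. Finally,
two tuples have the same multiset of entries exactly when one is a permutation of the other,
since equal multisets have fibres of equal size over every value.
-/

open Finset

theorem Equiv.Perm.exists_comp_eq_iff_map_univ_val_eq {ι α : Type*} [Fintype ι] {a b : ι → α} :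
    (∃ σ : Equiv.Perm ι, b ∘ σ = a) ↔ univ.val.map a = univ.val.map b := by
  classical
  constructor
  · rintro ⟨σ, rfl⟩
    rw [← Multiset.map_map, Multiset.map_univ_val_equiv]
  · intro h
    have hfibre (v : α) : Fintype.card {i // a i = v} = Fintype.card {i // b i = v} := by
      have hcount := congr_arg (Multiset.count v) h
      simp only [Multiset.count_map, eq_comm (a := v)] at hcount
      rw [Fintype.card_subtype, Fintype.card_subtype]
      exact hcount
    let σ := Equiv.ofFiberEquiv fun v => Fintype.equivOfCardEq (hfibre v)
    exact ⟨σ, funext (Equiv.ofFiberEquiv_map _)⟩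

theorem Equiv.Perm.exists_comp_eq_iff_ofFn_eq {α : Type*} {n : ℕ} {a b : Fin n → α} :
    (∃ σ : Equiv.Perm (Fin n), b ∘ σ = a) ↔
      (List.ofFn a : Multiset α) = (List.ofFn b : Multiset α) := by
  rw [exists_comp_eq_iff_map_univ_val_eq, Fin.univ_val_map, Fin.univ_val_map]

section Affine

variable {ι G : Type*} [Fintype ι] [AddCommMonoid G] [Mul G]

theorem sum_mul_comp_perm (σ : Equiv.Perm ι) (b x : ι → G) :
    ∑ i, b i * x (σ i) = ∑ i, b (σ.symm i) * x i := by
  rw [← Equiv.sum_comp σ (fun i => b (σ.symm i) * x i)]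
  simp only [Equiv.symm_apply_apply]

variable [One G]

theorem sum_mul_pi_single [DecidableEq ι] (hmul_one : ∀ a : G, a * 1 = a)
    (hzero : ∀ a : G, a * 0 = 0) (a : ι → G) (i : ι) :
    ∑ j, a j * (Pi.single i 1 : ι → G) j = a i := by
  rw [Finset.sum_eq_single i (fun j _ hj => by rw [Pi.single_eq_of_ne hj, hzero])
    (fun hi => absurd (mem_univ i) hi), Pi.single_eq_same, hmul_one]

theorem eq_and_eq_of_forall_sum_mul_add_eq (hmul_one : ∀ a : G, a * 1 = a)
    (hzero : ∀ a : G, a * 0 = 0) {a b : ι → G} {c d : G}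
    (hcase : (c = 0 ∧ d = 0) ∨ (∀ u v w : G, u + v = u + w → v = w))
    (h : ∀ x : ι → G, ∑ i, a i * x i + c = ∑ i, b i * x i + d) : a = b ∧ c = d := by
  classical
  have hcd : c = d := by simpa only [Pi.zero_apply, hzero, sum_const_zero, zero_add] using h 0
  refine ⟨funext fun i => ?_, hcd⟩
  have hi : a i + c = b i + d := by
    simpa only [sum_mul_pi_single hmul_one hzero] using h (Pi.single i 1)
  rcases hcase with ⟨rfl, rfl⟩ | hcancel
  · simpa only [add_zero] using hi
  · rw [← hcd, add_comm (a i), add_comm (b i)] at hi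
    exact hcancel c _ _ hi

end Affine

theorem stmt13_general {G : Type*} [AddCommMonoid G] [Mul G] [One G]
    (hmul_one : ∀ a : G, a * 1 = a)
    (hzero : ∀ a : G, a * 0 = 0)
    {n : ℕ} (a b : Fin n → G) (c d : G)
    (hcase : (c = 0 ∧ d = 0) ∨ (∀ u v w : G, u + v = u + w → v = w)) :
    (∃ σ : Equiv.Perm (Fin n),
        ∀ x : Fin n → G, (∑ i, a i * x i) + c = (∑ i, b i * x (σ i)) + d) ↔
    ((List.ofFn a : Multiset G) = (List.ofFn b : Multiset G) ∧ c = d) := by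
  rw [← Equiv.Perm.exists_comp_eq_iff_ofFn_eq]
  constructor
  · rintro ⟨σ, h⟩
    simp only [sum_mul_comp_perm σ] at h
    obtain ⟨rfl, rfl⟩ := eq_and_eq_of_forall_sum_mul_add_eq hmul_one hzero hcase h
    exact ⟨⟨σ.symm, rfl⟩, rfl⟩
  · rintro ⟨⟨σ, rfl⟩, rfl⟩
    refine ⟨σ.symm, fun x => ?_⟩
    rw [sum_mul_comp_perm, Equiv.symm_symm]
    rfl

theorem stmt13 {G : Type*} [AddCommMonoid G] [Mul G] [One G]
    (hmul_one : ∀ a : G, a * 1 = a)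
    (hdist : ∀ a b c : G, (a + b) * c = a * c + b * c)
    (hzero : ∀ a : G, a * 0 = 0)
    {n : ℕ} (a b : Fin n → G) (c d : G)
    (hcase : (c = 0 ∧ d = 0) ∨ (∀ u v w : G, u + v = u + w → v = w)) :
    (∃ σ : Equiv.Perm (Fin n),
        ∀ x : Fin n → G, (∑ i, a i * x i) + c = (∑ i, b i * x (σ i)) + d) ↔
    ((List.ofFn a : Multiset G) = (List.ofFn b : Multiset G) ∧ c = d) :=
  stmt13_general hmul_one hzero a b c d hcase
end

section
/- Let G be a non-associative semiring (a type with an additively commutative monoid structure with neutral element 0, a multiplication with unit 1, distributing over addition, and with 0 annihilating under multiplication). Let f : G^n → G, f(x_1, …, x_n) = a_1x_1 + ⋯ + a_nx_n + c, be an affine function with n ≥ 2. Then for every 2-element subset I = {i, j} of {1, …, n} with i < j, the identification minor f_I is the affine function with constant term c whose coefficient multiset is (⟨a_1, …, a_n⟩ \ ⟨a_i, a_j⟩) ⊎ ⟨a_i + a_j⟩. Consequently, the multiset ⟨C_{f_I} : I a 2-element subset of {1,…,n}⟩ of coefficient multisets of the identification minors of f equals the deck of the multiset C_f = ⟨a_1,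 …, a_n⟩. -/
/-- The identification minor f_{i,j} (for i < j) of a function of arity n+1:
the j-th argument is identified with the i-th one, i.e.
f_I(x_1, …, x_n) = f(y_1, …, y_{n+1}) where y_k = x_k for k < j, y_j = x_i,
and y_k = x_{k-1} for k > j. -/
def funMinor {G : Type*} {n : ℕ} (f : (Fin (n + 1) → G) → G) (i j : Fin (n + 1))
    (hij : i < j) : (Fin n → G) → G :=
  fun x => f (fun k =>
    if hk : (k : ℕ) < (j : ℕ) then
      x ⟨(k : ℕ), by have := j.isLt; omega⟩
    else if hk' : (k : ℕ) = (j : ℕ) then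
      x ⟨(i : ℕ), by have := j.isLt; have hij' : (i : ℕ) < (j : ℕ) := hij; omega⟩
    else
      x ⟨(k : ℕ) - 1, by have := k.isLt; omega⟩)

/-- The multiset of all identification minors f_{i,j}, i < j, of f. -/
def fminors {G : Type*} {n : ℕ} (f : (Fin (n + 1) → G) → G) :
    Multiset ((Fin n → G) → G) :=
  ((Finset.univ.filter
      (fun p : Fin (n + 1) × Fin (n + 1) => p.1 < p.2)).attach.val.map
    (fun p => funMinor f p.1.1 p.1.2
      (by have h := p.2; rw [Finset.mem_filter] at h; exact h.2)))

/-- Equivalence of functions of several arguments: g is obtained from f by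
permuting arguments. -/
def funEquiv {G : Type*} {m : ℕ} (f g : (Fin m → G) → G) : Prop :=
  ∃ σ : Equiv.Perm (Fin m), ∀ x : Fin m → G, f x = g (fun i => x (σ i))

/-! Identifying `x_j` with `x_i` feeds `f` the tuple `j.insertNth (x i) x`, so the term
`a_j x_i` merges with `a_i x_i` into `(a_i + a_j) x_i` by right distributivity. On the coefficient
multiset this removes `a_i` and `a_j` and adds `a_i + a_j`, which is the card `M_{i,j}`. -/

open Finset

section Multisets

variable {α : Type*} [DecidableEq α] {m : ℕ}

lemma Fin.coe_ofFn_update (g : Fin m → α) (i : Fin m) (v : α) :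
    (List.ofFn (Function.update g i v) : Multiset α) =
      v ::ₘ (List.ofFn g : Multiset α).erase (g i) := by
  rw [← Fin.univ_val_map, ← Fin.univ_val_map, ← Multiset.cons_erase (mem_univ_val i),
    Multiset.map_cons, Multiset.map_cons, Function.update_self, Multiset.erase_cons_head]
  congr 1
  refine Multiset.map_congr rfl fun k hk => Function.update_of_ne ?_ _ _
  exact (univ.nodup.mem_erase_iff.1 hk).1

lemma Fin.coe_ofFn_comp_succAbove (a : Fin (m + 1) → α) (j : Fin (m + 1)) :
    (List.ofFn (fun k => a (j.succAbove k)) : Multiset α) =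
      (List.ofFn a : Multiset α).erase (a j) := by
  rw [← Fin.univ_val_map, ← Fin.univ_val_map, Fin.univ_succAbove _ j, Finset.cons_val,
    Finset.map_val, Multiset.map_cons, Multiset.erase_cons_head, Multiset.map_map]
  rfl

lemma Fin.map_filter_ne_ne (g : Fin m → α) {i j : Fin m} (hij : i ≠ j) :
    (univ.filter fun k => k ≠ i ∧ k ≠ j).val.map g =
      (List.ofFn g : Multiset α) - {g i, g j} := by
  have hfilter : (univ.filter fun k => k ≠ i ∧ k ≠ j) = (univ.erase i).erase j := by
    ext k
    simp [and_comm]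
  rw [hfilter, Finset.erase_val, Finset.erase_val,
    Multiset.map_erase_of_mem _ _ ((Multiset.mem_erase_of_ne hij.symm).2 (mem_univ_val j)),
    Multiset.map_erase_of_mem _ _ (mem_univ_val i), Fin.univ_val_map,
    Multiset.insert_eq_cons, Multiset.sub_cons, Multiset.sub_singleton]

lemma mcard_eq (op : α → α → α) (g : Fin m → α) {i j : Fin m} (hij : i ≠ j) :
    mcard op g i j = (List.ofFn g : Multiset α) - {g i, g j} + {op (g i) (g j)} := by
  rw [mcard, Fin.map_filter_ne_ne g hij]

end Multisets

lemma funMinor_apply {G : Type*} {n : ℕ} (f : (Fin (n + 1) → G) → G) {i j : Fin (n + 1)}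
    (hij : i < j) (x : Fin n → G) :
    funMinor f i j hij x = f (j.insertNth (x (i.castPred (Fin.ne_last_of_lt hij))) x) := by
  rw [funMinor]
  congr 1
  funext k
  obtain rfl | ⟨k, rfl⟩ := j.eq_self_or_eq_succAbove k
  · simp only [lt_irrefl, dite_false, dite_true, Fin.insertNth_apply_same]
    rfl
  · rw [Fin.insertNth_apply_succAbove]
    by_cases hk : k.castSucc < j
    · have hk' : (k : ℕ) < j := hk
      simp only [Fin.succAbove_of_castSucc_lt _ _ hk, Fin.val_castSucc, dif_pos hk']
    · have hk' : (j : ℕ) ≤ k := not_lt.1 hk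
      simp only [Fin.succAbove_of_le_castSucc _ _ (not_lt.1 hk), Fin.val_succ,
        dif_neg (show ¬((k : ℕ) + 1 < j) by omega), dif_neg (show (k : ℕ) + 1 ≠ j by omega),
        Nat.add_sub_cancel]

section MinorCoeffs

variable {G : Type*} [AddCommMonoid G] {n : ℕ}

def minorCoeffs (a : Fin (n + 1) → G) {i j : Fin (n + 1)} (hij : i < j) : Fin n → G :=
  Function.update (fun k => a (j.succAbove k)) (i.castPred (Fin.ne_last_of_lt hij)) (a i + a j)

lemma minorCoeffs_eq_update (a : Fin (n + 1) → G) {i j : Fin (n + 1)} (hij : i < j) :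
    minorCoeffs a hij =
      Function.update (fun k => a (j.succAbove k)) (i.castPred (Fin.ne_last_of_lt hij))
        (a (j.succAbove (i.castPred (Fin.ne_last_of_lt hij))) + a j) := by
  rw [Fin.succAbove_castPred_of_lt _ _ hij, minorCoeffs]

lemma coe_ofFn_minorCoeffs [DecidableEq G] (a : Fin (n + 1) → G) {i j : Fin (n + 1)}
    (hij : i < j) :
    (List.ofFn (minorCoeffs a hij) : Multiset G) =
      (List.ofFn a : Multiset G) - {a i, a j} + {a i + a j} := by
  rw [minorCoeffs, Fin.coe_ofFn_update, Fin.coe_ofFn_comp_succAbove,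
    Fin.succAbove_castPred_of_lt _ _ hij, Multiset.erase_comm, Multiset.insert_eq_cons,
    Multiset.sub_cons, Multiset.sub_singleton, add_comm _ {a i + a j}, Multiset.singleton_add]

end MinorCoeffs

section Affine

variable {G : Type*} [AddCommMonoid G] [Mul G] {n : ℕ}

lemma Fin.sum_mul_insertNth (a : Fin (n + 1) → G) (j : Fin (n + 1)) (v : G) (x : Fin n → G) :
    ∑ k, a k * (j.insertNth v x : Fin (n + 1) → G) k =
      a j * v + ∑ k, a (j.succAbove k) * x k := by
  rw [Fin.sum_univ_succAbove _ j, Fin.insertNth_apply_same]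
  simp only [Fin.insertNth_apply_succAbove]

lemma sum_update_add_mul [RightDistribClass G] {ι : Type*} [Fintype ι] [DecidableEq ι]
    (b : ι → G) (i : ι) (d : G) (x : ι → G) :
    ∑ k, Function.update b i (b i + d) k * x k = ∑ k, b k * x k + d * x i := by
  rw [← add_sum_erase _ _ (mem_univ i), ← add_sum_erase _ (fun k => b k * x k) (mem_univ i),
    Function.update_self, add_mul, add_right_comm,
    sum_congr rfl fun k hk => by rw [Function.update_of_ne (ne_of_mem_erase hk)]]

lemma funMinor_eq_affine [RightDistribClass G] {a : Fin (n + 1) → G} {c : G}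
    {f : (Fin (n + 1) → G) → G} (hf : ∀ x, f x = ∑ k, a k * x k + c)
    {i j : Fin (n + 1)} (hij : i < j) (x : Fin n → G) :
    funMinor f i j hij x = ∑ k, minorCoeffs a hij k * x k + c := by
  rw [funMinor_apply, hf, Fin.sum_mul_insertNth, minorCoeffs_eq_update, sum_update_add_mul,
    add_comm (a j * _)]

end Affine

theorem stmt14_general {G : Type*} [AddCommMonoid G] [Mul G] [DecidableEq G]
    (hdist : ∀ a b c : G, (a + b) * c = a * c + b * c)
    {n : ℕ}
    (a : Fin (n + 1) → G) (c : G)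
    (f : (Fin (n + 1) → G) → G)
    (hf : ∀ x : Fin (n + 1) → G, f x = (∑ i, a i * x i) + c) :
    (∀ (i j : Fin (n + 1)) (hij : i < j),
      ∃ b : Fin n → G,
        (∀ x : Fin n → G, funMinor f i j hij x = (∑ k, b k * x k) + c) ∧
        (List.ofFn b : Multiset G)
          = ((List.ofFn a : Multiset G) - {a i, a j}) + {a i + a j}) ∧
    ((Finset.univ.filter
        (fun p : Fin (n + 1) × Fin (n + 1) => p.1 < p.2)).val.map
      (fun p => ((List.ofFn a : Multiset G) - {a p.1, a p.2}) + {a p.1 + a p.2}))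
      = mdeck (· + ·) a := by
  have : RightDistribClass G := ⟨hdist⟩
  refine ⟨fun i j hij =>
    ⟨minorCoeffs a hij, funMinor_eq_affine hf hij, coe_ofFn_minorCoeffs a hij⟩, ?_⟩
  exact Multiset.map_congr rfl fun p hp => (mcard_eq _ a (mem_filter.1 hp).2.ne).symm

theorem stmt14 {G : Type*} [AddCommMonoid G] [Mul G] [One G] [DecidableEq G]
    (hmul_one : ∀ a : G, a * 1 = a)
    (hdist : ∀ a b c : G, (a + b) * c = a * c + b * c)
    (hzero : ∀ a : G, a * 0 = 0)
    {n : ℕ} (hn : 1 ≤ n)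
    (a : Fin (n + 1) → G) (c : G)
    (f : (Fin (n + 1) → G) → G)
    (hf : ∀ x : Fin (n + 1) → G, f x = (∑ i, a i * x i) + c) :
    (∀ (i j : Fin (n + 1)) (hij : i < j),
      ∃ b : Fin n → G,
        (∀ x : Fin n → G, funMinor f i j hij x = (∑ k, b k * x k) + c) ∧
        (List.ofFn b : Multiset G)
          = ((List.ofFn a : Multiset G) - {a i, a j}) + {a i + a j}) ∧
    ((Finset.univ.filter
        (fun p : Fin (n + 1) × Fin (n + 1) => p.1 < p.2)).val.map
      (fun p => ((List.ofFn a : Multiset G) - {a p.1, a p.2}) + {a p.1 + a p.2}))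
      = mdeck (· + ·) a :=
  stmt14_general hdist a c f hf
end

section
/- Let G be a finite field of order q, and let n > max(q, 3). If f : G^n → G is not affine, then there exists a 2-element subset I of {1, …, n} such that the identification minor f_I : G^{n−1} → G is not affine. -/
/-! If every identification minor of `f` is affine, then `f` agrees with an affine map on each
diagonal hyperplane `x i = x j`, with constant term `f 0`. Since there are more coordinates than
field elements, every point lies on such a diagonal, so it suffices to see that all these local
affine maps agree on their diagonals with `x ↦ ∑ m, (f (e m) - f 0) * x m + f 0`, where the `e m`
are the unit vectors. Off `{i, j}` the coefficients are forced by evaluating at unit vectors; at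
`i` and `j` only their sum matters on the diagonal, and it is forced because
`f (e i + e j) + f 0 = f (e i) + f (e j)`: with at least four coordinates, `e i` and `e j` both lie
on some diagonal `x k = x l` disjoint from `{i, j}`, on which `f` is affine. -/

lemma funMinor_comp_succAbove {G : Type*} {n : ℕ} (f : (Fin (n + 1) → G) → G)
    {i j : Fin (n + 1)} (hij : i < j) {y : Fin (n + 1) → G} (hy : y i = y j) :
    funMinor f i j hij (y ∘ j.succAbove) = f y := by
  unfold funMinor
  congr 1
  funext m
  split_ifs with h₁ h₂
  · rw [Function.comp_apply, Fin.succAbove_of_castSucc_lt _ _ h₁]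
    rfl
  · rw [Function.comp_apply, Fin.succAbove_of_castSucc_lt _ _ hij]
    exact hy.trans (congrArg y (Fin.ext h₂.symm))
  · rw [Function.comp_apply, Fin.succAbove_of_le_castSucc _ _ (show (j : ℕ) ≤ m - 1 by omega)]
    congr 1
    ext
    simp only [Fin.val_succ]
    omega

section Diagonal

variable {ι R : Type*} [Fintype ι] [CommRing R] {f : (ι → R) → R}

def IsAffineOnDiagonal (f : (ι → R) → R) (i j : ι) : Prop :=
  ∃ (a : ι → R) (c : R), ∀ x, x i = x j → f x = a ⬝ᵥ x + c

theorem IsAffineOnDiagonal.symm {i j : ι} (h : IsAffineOnDiagonal f i j) :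
    IsAffineOnDiagonal f j i :=
  let ⟨a, c, h⟩ := h; ⟨a, c, fun x hx => h x hx.symm⟩

theorem IsAffineOnDiagonal.exists_eq_dotProduct_add_map_zero {i j : ι}
    (h : IsAffineOnDiagonal f i j) : ∃ a : ι → R, ∀ x, x i = x j → f x = a ⬝ᵥ x + f 0 := by
  obtain ⟨a, c, h⟩ := h
  have hc : f 0 = c := by simpa using h 0 rfl
  exact ⟨a, hc ▸ h⟩

theorem IsAffineOnDiagonal.map_add_add_map_zero {i j : ι} (h : IsAffineOnDiagonal f i j)
    {x y : ι → R} (hx : x i = x j) (hy : y i = y j) : f (x + y) + f 0 = f x + f y := by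
  obtain ⟨a, h⟩ := h.exists_eq_dotProduct_add_map_zero
  rw [h x hx, h y hy, h (x + y) (by simp [hx, hy]), dotProduct_add]
  ring

theorem map_single_add_single_add_map_zero [DecidableEq ι] (hι : 3 < Fintype.card ι)
    (hf : ∀ k l, k ≠ l → IsAffineOnDiagonal f k l) {i j : ι} (hij : i ≠ j) :
    f (Pi.single i 1 + Pi.single j 1) + f 0 = f (Pi.single i 1) + f (Pi.single j 1) := by
  have hcard : 1 < ({i, j}ᶜ : Finset ι).card := by
    rw [Finset.card_compl, Finset.card_pair hij]
    omega
  obtain ⟨k, hk, l, hl, hkl⟩ := Finset.one_lt_card.mp hcard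
  simp only [Finset.mem_compl, Finset.mem_insert, Finset.mem_singleton, not_or] at hk hl
  exact (hf k l hkl).map_add_add_map_zero
    (by simp [Ne.symm hk.1, Ne.symm hl.1])
    (by simp [Ne.symm hk.2, Ne.symm hl.2])

theorem exists_affine_of_forall_isAffineOnDiagonal [Fintype R] (hι : 3 < Fintype.card ι)
    (hR : Fintype.card R < Fintype.card ι) (hf : ∀ i j, i ≠ j → IsAffineOnDiagonal f i j) :
    ∃ (a : ι → R) (c : R), ∀ x, f x = a ⬝ᵥ x + c := by
  classical
  set a : ι → R := fun m => f (Pi.single m 1) - f 0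
  refine ⟨a, f 0, fun x => ?_⟩
  obtain ⟨i, j, hij, hx⟩ := Fintype.exists_ne_map_eq_of_card_lt x hR
  obtain ⟨b, hb⟩ := (hf i j hij).exists_eq_dotProduct_add_map_zero
  have hoff : ∀ m, m ≠ i ∧ m ≠ j → b m - a m = 0 := by
    rintro m ⟨hmi, hmj⟩
    have := hb (Pi.single m 1) (by simp [hmi.symm, hmj.symm])
    rw [dotProduct_single, mul_one] at this
    simp only [a, this]
    ring
  have hsum : b i + b j = a i + a j := by
    have := hb (Pi.single i 1 + Pi.single j 1) (by simp [hij, hij.symm])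
    rw [dotProduct_add, dotProduct_single, dotProduct_single] at this
    linear_combination map_single_add_single_add_map_zero hι hf hij - this
  rw [hb x hx, ← sub_eq_zero, add_sub_add_right_eq_sub, ← sub_dotProduct, dotProduct,
    Fintype.sum_eq_add i j hij (fun m hm => by rw [Pi.sub_apply, hoff m hm, zero_mul])]
  simp only [Pi.sub_apply, hx]
  linear_combination x j * hsum

end Diagonal

theorem isAffineOnDiagonal_of_funMinor {R : Type*} [CommRing R] {n : ℕ}
    {f : (Fin (n + 1) → R) → R} {i j : Fin (n + 1)} {hij : i < j} {b : Fin n → R} {c : R}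
    (h : ∀ x, funMinor f i j hij x = b ⬝ᵥ x + c) : IsAffineOnDiagonal f i j := by
  refine ⟨Fin.insertNth j 0 b, c, fun y hy => ?_⟩
  rw [← funMinor_comp_succAbove f hij hy, h, dotProduct, dotProduct, Fin.sum_univ_succAbove _ j]
  simp

theorem stmt16 {G : Type*} [Field G] [Fintype G] {n : ℕ}
    (hn : max (Fintype.card G) 3 < n + 1)
    (f : (Fin (n + 1) → G) → G)
    (hf : ¬ ∃ (a : Fin (n + 1) → G) (c : G),
        ∀ x : Fin (n + 1) → G, f x = (∑ i, a i * x i) + c) :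
    ∃ (i j : Fin (n + 1)) (hij : i < j),
      ¬ ∃ (b : Fin n → G) (c : G),
        ∀ x : Fin n → G, funMinor f i j hij x = (∑ k, b k * x k) + c := by
  by_contra! hminors
  have hdiag : ∀ i j, i ≠ j → IsAffineOnDiagonal f i j := by
    intro i j hij
    rcases hij.lt_or_gt with hlt | hgt
    · obtain ⟨b, c, h⟩ := hminors i j hlt
      exact isAffineOnDiagonal_of_funMinor h
    · obtain ⟨b, c, h⟩ := hminors j i hgt
      exact (isAffineOnDiagonal_of_funMinor h).symm
  rw [max_lt_iff] at hn
  exact hf (exists_affine_of_forall_isAffineOnDiagonal (by simpa using hn.2)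
    (by simpa using hn.1) hdiag)
end

section
/- Let F be a field and n ≥ 2, and define Δ_n : F^n → F by Δ_n(x_1, …, x_n) = ∏_{1 ≤ i < j ≤ n} (x_i − x_j). Then for every 2-element subset I of {1, …, n}, the identification minor (Δ_n)_I is the constant zero function; consequently, for every function f : F^n → F (not necessarily a polynomial function) and every such I, one has f_I = (f + Δ_n)_I, and hence deck f = deck (f + Δ_n). -/
/-! The point at which an identification minor evaluates its function has equal `i`-th and
`j`-th coordinates, so the factor `x i - x j` of the Vandermonde-type product vanishes there;
since taking minors commutes with pointwise addition, `f` and `f + Δ` have the same minors. -/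

section Minors

variable {G : Type*} {n : ℕ}

theorem funEquiv_refl (f : (Fin n → G) → G) : funEquiv f f :=
  ⟨Equiv.refl _, fun _ => rfl⟩

theorem funMinor_eq_zero_of_eq_zero_of_apply_eq [Zero G] {f : (Fin (n + 1) → G) → G}
    {i j : Fin (n + 1)} (hij : i < j) (hf : ∀ y, y i = y j → f y = 0) :
    funMinor f i j hij = fun _ => 0 := by
  funext x
  refine hf _ ?_
  have hij' : (i : ℕ) < j := hij
  simp only [dif_pos hij', lt_irrefl, dif_neg, not_false_eq_true, dite_true]

theorem funMinor_add_of_eq_zero [AddZeroClass G] (f g : (Fin (n + 1) → G) → G)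
    {i j : Fin (n + 1)} (hij : i < j) (hg : funMinor g i j hij = fun _ => 0) :
    funMinor (fun x => f x + g x) i j hij = funMinor f i j hij := by
  funext x
  exact (congrArg (funMinor f i j hij x + ·) (congrFun hg x)).trans (add_zero _)

theorem fminors_congr {f g : (Fin (n + 1) → G) → G}
    (h : ∀ (i j : Fin (n + 1)) (hij : i < j), funMinor f i j hij = funMinor g i j hij) :
    fminors f = fminors g :=
  Multiset.map_congr rfl fun _ _ => h _ _ _

end Minors

theorem prod_sub_eq_zero_of_apply_eq {R : Type*} [CommRing R] {n : ℕ} {x : Fin n → R}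
    {i j : Fin n} (hij : i < j) (hx : x i = x j) :
    ∏ p ∈ Finset.univ.filter (fun p : Fin n × Fin n => p.1 < p.2), (x p.1 - x p.2) = 0 :=
  Finset.prod_eq_zero (i := (i, j)) (by simp [hij]) (sub_eq_zero.mpr hx)

theorem stmt18_general {F : Type*} [Field F] {n : ℕ} :
    ∀ Δ : (Fin (n + 1) → F) → F,
      Δ = (fun x => ∏ p ∈ Finset.univ.filter
            (fun p : Fin (n + 1) × Fin (n + 1) => p.1 < p.2), (x p.1 - x p.2)) →
      ((∀ (i j : Fin (n + 1)) (hij : i < j),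
          funMinor Δ i j hij = fun _ => 0) ∧
       (∀ f : (Fin (n + 1) → F) → F,
          (∀ (i j : Fin (n + 1)) (hij : i < j),
            funMinor f i j hij = funMinor (fun x => f x + Δ x) i j hij) ∧
          Multiset.Rel funEquiv (fminors f) (fminors (fun x => f x + Δ x)))) := by
  intro Δ hΔ
  have hminorΔ : ∀ (i j : Fin (n + 1)) (hij : i < j), funMinor Δ i j hij = fun _ => 0 :=
    fun i j hij => funMinor_eq_zero_of_eq_zero_of_apply_eq hij fun y hy => by
      rw [hΔ]
      exact prod_sub_eq_zero_of_apply_eq hij hy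
  have hminor : ∀ f : (Fin (n + 1) → F) → F, ∀ (i j : Fin (n + 1)) (hij : i < j),
      funMinor f i j hij = funMinor (fun x => f x + Δ x) i j hij :=
    fun f i j hij => (funMinor_add_of_eq_zero f Δ hij (hminorΔ i j hij)).symm
  refine ⟨hminorΔ, fun f => ⟨hminor f, ?_⟩⟩
  rw [fminors_congr (hminor f)]
  exact Multiset.rel_refl_of_refl_on fun g _ => funEquiv_refl g

theorem stmt18 {F : Type*} [Field F] {n : ℕ} (hn : 1 ≤ n) :
    ∀ Δ : (Fin (n + 1) → F) → F,
      Δ = (fun x => ∏ p ∈ Finset.univ.filter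
            (fun p : Fin (n + 1) × Fin (n + 1) => p.1 < p.2), (x p.1 - x p.2)) →
      ((∀ (i j : Fin (n + 1)) (hij : i < j),
          funMinor Δ i j hij = fun _ => 0) ∧
       (∀ f : (Fin (n + 1) → F) → F,
          (∀ (i j : Fin (n + 1)) (hij : i < j),
            funMinor f i j hij = funMinor (fun x => f x + Δ x) i j hij) ∧
          Multiset.Rel funEquiv (fminors f) (fminors (fun x => f x + Δ x)))) :=
  stmt18_general
end

section
/- Let (G, +) be a commutative (abelian) group and let n ≥ 3. Let M = ⟨m_1, …, m_n⟩ and M' = ⟨m_1 + m_2, m_2 + m_3, −m_2, m_4, …, m_n⟩ be multisets over G. Then both of the multisets ⟨m_1 + m_2, m_3, m_4, …, m_n⟩ and ⟨m_1, m_2 + m_3, m_4, …, m_n⟩ occur as cards of M and also as cards of M'; in particular, M and M' have at least two cards in common, so a multiset of cardinality n ≥ 3 over a commutative group is not determined by any two of its cards. -/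
/-!
Everything happens in the first three entries: `m'₂ + m'₃ = m₃` and `m'₁ + m'₃ = m₁`, so
`M'_{2,3} = ⟨m₁ + m₂, m₃, m₄, …⟩ = M_{1,2}` and `M'_{1,3} = ⟨m₂ + m₃, m₁, m₄, …⟩ = M_{2,3}`
(positions are `0, 1, 2` in the code).
-/

section

variable {G : Type*} (op : G → G → G) {n : ℕ}

theorem mcard_mem_mdeck (m : Fin n → G) {i j : Fin n} (h : i < j) :
    mcard op m i j ∈ mdeck op m :=
  Multiset.mem_map.mpr ⟨(i, j), by simpa using h, rfl⟩

theorem mcard_eq_cons_cons (m : Fin n → G) {a b c : Fin n} (hac : a ≠ c) (hbc : b ≠ c) :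
    mcard op m a b = m c ::ₘ op (m a) (m b) ::ₘ ({a, b, c}ᶜ : Finset (Fin n)).val.map m := by
  have hsplit : Finset.univ.filter (fun k : Fin n => k ≠ a ∧ k ≠ b) =
      insert c ({a, b, c}ᶜ : Finset (Fin n)) := by
    ext k
    by_cases hk : k = c <;> simp [hk, hac.symm, hbc.symm]
  have hc : c ∉ ({a, b, c}ᶜ : Finset (Fin n)) := by simp
  rw [mcard, hsplit, Finset.insert_val_of_notMem hc, Multiset.map_cons, Multiset.cons_add,
    Multiset.add_comm, Multiset.singleton_add]

theorem mcard_eq_mcard_of_eqOn_compl {m m' : Fin n → G} {a b c a' b' c' : Fin n}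
    (hac : a ≠ c) (hbc : b ≠ c) (hac' : a' ≠ c') (hbc' : b' ≠ c')
    {s : Finset (Fin n)} (hs : {a, b, c} = s) (hs' : {a', b', c'} = s)
    (hrest : Set.EqOn m' m ↑sᶜ)
    (hc : m' c = op (m a') (m b')) (hc' : op (m' a) (m' b) = m c') :
    mcard op m' a b = mcard op m a' b' := by
  rw [mcard_eq_cons_cons op m' hac hbc, mcard_eq_cons_cons op m hac' hbc', hs, hs',
    Multiset.map_congr rfl fun i hi => hrest hi, hc, hc', Multiset.cons_swap]

end

theorem stmt19 {G : Type*} [AddCommGroup G] {k : ℕ} (m : Fin (k + 3) → G) :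
    ∀ m' : Fin (k + 3) → G,
      m' = (fun i : Fin (k + 3) =>
        if i = 0 then m 0 + m 1 else if i = 1 then m 1 + m 2
        else if i = 2 then -(m 1) else m i) →
      (mcard (· + ·) m 0 1 ∈ mdeck (· + ·) m ∧
       mcard (· + ·) m 0 1 ∈ mdeck (· + ·) m' ∧
       mcard (· + ·) m 1 2 ∈ mdeck (· + ·) m ∧
       mcard (· + ·) m 1 2 ∈ mdeck (· + ·) m') := by
  intro m' hm'
  have h01 : (0 : Fin (k + 3)) < 1 := by simp
  have h12 : (1 : Fin (k + 3)) < 2 := by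
    simp [Fin.lt_def, Nat.mod_eq_of_lt (show 2 < k + 3 by omega)]
  have h02 : (0 : Fin (k + 3)) < 2 := h01.trans h12
  have hrest : Set.EqOn m' m ({0, 1, 2}ᶜ : Finset (Fin (k + 3))) := by
    intro i hi
    simp only [Finset.coe_compl, Finset.coe_insert, Finset.coe_singleton, Set.mem_compl_iff,
      Set.mem_insert_iff, Set.mem_singleton_iff, not_or] at hi
    simp [hm', hi.1, hi.2.1, hi.2.2]
  have hm'0 : m' 0 = m 0 + m 1 := by simp [hm']
  have hm'1 : m' 1 = m 1 + m 2 := by simp [hm', h01.ne']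
  have hm'2 : m' 2 = -m 1 := by simp [hm', h02.ne', h12.ne']
  have hcard₁ : mcard (· + ·) m' 1 2 = mcard (· + ·) m 0 1 :=
    mcard_eq_mcard_of_eqOn_compl _ h01.ne' h02.ne' h02.ne h12.ne
      (by ext; simp; tauto) rfl hrest hm'0 (by rw [hm'1, hm'2, add_neg_cancel_comm])
  have hcard₂ : mcard (· + ·) m' 0 2 = mcard (· + ·) m 1 2 :=
    mcard_eq_mcard_of_eqOn_compl _ h01.ne h12.ne' h01.ne' h02.ne'
      (by ext; simp; tauto) (by ext; simp; tauto) hrest hm'1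
      (by rw [hm'0, hm'2, add_neg_cancel_right])
  refine ⟨mcard_mem_mdeck _ m h01, ?_, mcard_mem_mdeck _ m h12, ?_⟩
  · exact hcard₁ ▸ mcard_mem_mdeck _ m' h12
  · exact hcard₂ ▸ mcard_mem_mdeck _ m' h02
end
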